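/- For every positive integer n, b2(n), defined as the sum over all odd partitions λ of n and all part values i of λ of (⌊log₂ m_i⌋ + 1), minus the total number of parts over all distinct-part partitions of n, equals the number of zeros in the binary representations of all multiplicities m_i over all odd partitions of n. -/

import Mathlib

/-!
Glaisher's bijection sends an odd partition with multiplicities `m_i` to the distinct partition
whose parts are the `2 ^ j * i` with `j` running over the positions of the ones in the binary
expansion of `m_i`. Its number of parts is the total number of binary ones of the `m_i`, so the
parts of all distinct partitions of `n` count those ones over all odd partitions of `n`. Since
`⌊log₂ m⌋ + 1` is the number of binary digits of `m`, subtracting leaves the zeros. Injectivity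
of the map on odd partitions is read off the binary expansions; surjectivity then follows from
Euler's `#(odds n) = #(distincts n)`.
-/

open Finset

namespace Nat

theorem digits_two_bit {b : Bool} {n : ℕ} (h : n = 0 → b = true) :
    digits 2 (bit b n) = b.toNat :: digits 2 n := by
  rw [digits_def' one_lt_two]
  · cases b <;> simp [Nat.bit]
    omega
  · cases b <;> simp_all [Nat.bit, pos_iff_ne_zero]

theorem length_bitIndices (n : ℕ) : n.bitIndices.length = (digits 2 n).count 1 := by
  induction n using binaryRec' with
  | zero => simp
  | bit b n h ih =>
    rw [digits_two_bit h]
    cases b <;> simp [ih]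

theorem count_zero_add_count_one_digits_two (n : ℕ) :
    (digits 2 n).count 0 + (digits 2 n).count 1 = (digits 2 n).length := by
  induction n using binaryRec' with
  | zero => simp
  | bit b n h ih =>
    rw [digits_two_bit h]
    cases b <;> simp <;> omega

theorem two_pow_mul_odd_inj {a b i k : ℕ} (hi : Odd i) (hk : Odd k) (h : 2 ^ a * i = 2 ^ b * k) :
    a = b ∧ i = k := by
  have hab : a = b := by
    simpa [Nat.factorization_mul, hi.pos.ne', hk.pos.ne', Nat.prime_two.factorization_self,
      Nat.factorization_eq_zero_of_not_dvd, hi.not_two_dvd_nat, hk.not_two_dvd_nat]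
      using congrArg (·.factorization 2) h
  subst hab
  exact ⟨rfl, Nat.eq_of_mul_eq_mul_left (by positivity) h⟩

theorem log_two_add_one_eq_count_zero_add_length_bitIndices {n : ℕ} (hn : n ≠ 0) :
    Nat.log 2 n + 1 = (digits 2 n).count 0 + n.bitIndices.length := by
  rw [length_bitIndices, count_zero_add_count_one_digits_two, length_digits 2 n one_lt_two hn]

namespace Partition

variable {n : ℕ}

theorem mem_odds {P : n.Partition} : P ∈ odds n ↔ ∀ i ∈ P.parts, Odd i := by
  simp [odds, restricted]

theorem mem_distincts {P : n.Partition} : P ∈ distincts n ↔ P.parts.Nodup := by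
  simp [distincts]

def glaisher (P : n.Partition) : n.Partition where
  parts := P.parts.toFinset.val.bind fun i => (P.parts.count i).bitIndices.map (2 ^ · * i)
  parts_pos := by
    simp only [Multiset.mem_bind, Multiset.mem_coe, List.mem_map]
    rintro _ ⟨i, hi, j, -, rfl⟩
    exact Nat.mul_pos (by positivity) (P.parts_pos (Multiset.mem_toFinset.1 hi))
  parts_sum := by
    rw [Multiset.sum_bind]
    simp only [Multiset.sum_coe, List.sum_map_mul_right, sum_map_two_pow_bitIndices]
    rw [← sum_eq_multiset_sum]
    simp_rw [← smul_eq_mul]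
    rw [← sum_multiset_count, P.parts_sum]

theorem card_glaisher_parts (P : n.Partition) :
    Multiset.card (glaisher P).parts =
      ∑ i ∈ P.parts.toFinset, (P.parts.count i).bitIndices.length := by
  simp [glaisher, sum_eq_multiset_sum, Function.comp_def]

theorem two_pow_mul_mem_glaisher_parts_iff {P : n.Partition} (hP : P ∈ odds n) {i j : ℕ}
    (hi : Odd i) : 2 ^ j * i ∈ (glaisher P).parts ↔ (P.parts.count i).testBit j := by
  simp only [glaisher, Multiset.mem_bind, Multiset.mem_coe, List.mem_map, mem_bitIndices,
    Finset.mem_val, Multiset.mem_toFinset]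
  constructor
  · rintro ⟨k, hk, l, hl, h⟩
    obtain ⟨rfl, rfl⟩ := two_pow_mul_odd_inj (mem_odds.1 hP k hk) hi h
    exact hl
  · intro hj
    have hi : i ∈ P.parts :=
      Multiset.count_pos.1 ((Nat.two_pow_pos j).trans_le (ge_two_pow_of_testBit hj))
    exact ⟨i, hi, j, hj, rfl⟩

theorem glaisher_mem_distincts {P : n.Partition} (hP : P ∈ odds n) :
    glaisher P ∈ distincts n := by
  simp only [mem_distincts, glaisher, Multiset.nodup_bind, Multiset.coe_nodup]
  refine ⟨fun i hi => ?_, P.parts.toFinset.nodup.pairwise fun i hi k hk hik => ?_⟩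
  · exact bitIndices_nodup.map fun a b h => Nat.pow_right_injective le_rfl
      (Nat.eq_of_mul_eq_mul_right (P.parts_pos (Multiset.mem_toFinset.1 hi)) h)
  · simp only [Function.onFun, Multiset.coe_disjoint, List.disjoint_left, List.mem_map]
    rintro _ ⟨a, -, rfl⟩ ⟨b, -, h⟩
    exact hik.symm (two_pow_mul_odd_inj (mem_odds.1 hP k (Multiset.mem_toFinset.1 hk))
      (mem_odds.1 hP i (Multiset.mem_toFinset.1 hi)) h).2

theorem injOn_glaisher : Set.InjOn glaisher (odds n : Set n.Partition) := by
  intro P hP Q hQ h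
  ext1
  ext i
  by_cases hi : Odd i
  · refine Nat.eq_of_testBit_eq fun j => Bool.eq_iff_iff.2 ?_
    rw [← two_pow_mul_mem_glaisher_parts_iff hP hi, ← two_pow_mul_mem_glaisher_parts_iff hQ hi,
      h]
  · have hnot (R : n.Partition) (hR : R ∈ odds n) : i ∉ R.parts :=
      fun h => hi (mem_odds.1 hR i h)
    rw [Multiset.count_eq_zero_of_notMem (hnot P hP), Multiset.count_eq_zero_of_notMem (hnot Q hQ)]

theorem sum_odds_length_bitIndices_eq_sum_distincts_card :
    ∑ P ∈ odds n, ∑ i ∈ P.parts.toFinset, (P.parts.count i).bitIndices.length =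
      ∑ Q ∈ distincts n, Multiset.card Q.parts := by
  have hmaps : Set.MapsTo glaisher (odds n : Set n.Partition) (distincts n) :=
    fun P hP => glaisher_mem_distincts hP
  refine sum_nbij glaisher hmaps injOn_glaisher
    (surjOn_of_injOn_of_card_le _ hmaps injOn_glaisher (card_odds_eq_card_distincts n).ge)
    fun P _ => (card_glaisher_parts P).symm

end Partition

end Nat

theorem b2_eq_number_of_zeros_general (n : ℕ) :
    (∑ P ∈ Nat.Partition.odds n,
        ∑ i ∈ P.parts.toFinset, ((Nat.log 2 (P.parts.count i) + 1 : ℕ) : ℤ)) -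
        (∑ P ∈ Nat.Partition.distincts n, (Multiset.card P.parts : ℤ)) =
      ∑ P ∈ Nat.Partition.odds n,
        ∑ i ∈ P.parts.toFinset, (((Nat.digits 2 (P.parts.count i)).count 0 : ℕ) : ℤ) := by
  rw [sub_eq_iff_eq_add]
  exact_mod_cast calc
    ∑ P ∈ Nat.Partition.odds n, ∑ i ∈ P.parts.toFinset, (Nat.log 2 (P.parts.count i) + 1)
      = ∑ P ∈ Nat.Partition.odds n, ∑ i ∈ P.parts.toFinset,
          ((Nat.digits 2 (P.parts.count i)).count 0 + (P.parts.count i).bitIndices.length) :=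
        sum_congr rfl fun P _ => sum_congr rfl fun i hi =>
          Nat.log_two_add_one_eq_count_zero_add_length_bitIndices
            (Multiset.count_ne_zero.2 (Multiset.mem_toFinset.1 hi))
    _ = _ := by
        simp only [sum_add_distrib, Nat.Partition.sum_odds_length_bitIndices_eq_sum_distincts_card]

theorem b2_eq_number_of_zeros (n : ℕ) (hn : 0 < n) :
    (∑ P ∈ Nat.Partition.odds n,
        ∑ i ∈ P.parts.toFinset, ((Nat.log 2 (P.parts.count i) + 1 : ℕ) : ℤ)) -
        (∑ P ∈ Nat.Partition.distincts n, (Multiset.card P.parts : ℤ)) =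
      ∑ P ∈ Nat.Partition.odds n,
        ∑ i ∈ P.parts.toFinset, (((Nat.digits 2 (P.parts.count i)).count 0 : ℕ) : ℤ) :=
  b2_eq_number_of_zeros_general n
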